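/- arXiv:math/0504120 — 6 statements merged into one kernel-verified Lean document; each statement's English description precedes it below -/
import Mathlib

section
/- For every g ∈ G^σ, the set π_g is closed under inversion in π₁(G,e): an element x ∈ π₁(G,e) belongs to π_g if and only if x⁻¹ belongs to π_g. -/
noncomputable section

open scoped Manifold Pointwise

attribute [local instance] Path.Homotopic.setoid

universe u v

/-- The subgroup of fixed points `G^σ` of a group homomorphism `σ : G →* G`. -/
def sigmaFixed {G : Type u} [Group G] (σ : G →* G) : Subgroup G where
  carrier := {g : G | σ g = g}
  one_mem' := map_one σ
  mul_mem' := by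
    intro a b ha hb
    simp only [Set.mem_setOf_eq] at *
    rw [map_mul, ha, hb]
  inv_mem' := by
    intro a ha
    simp only [Set.mem_setOf_eq] at *
    rw [map_inv, ha]

/-- The loop `γ^σ` based at `e`: traverse `γ` on `[0,1/2]` (with speed 2), then traverse
`σ ∘ γ` backwards on `[1/2,1]`, i.e. `t ↦ σ(γ(2-2t))`. -/
def sigmaLoop {G : Type u} [Group G] [TopologicalSpace G] (σ : G →* G)
    (hσ : Continuous σ) {g : G} (hg : σ g = g) (γ : Path (1 : G) g) :
    Path (1 : G) (1 : G) :=
  γ.trans (((γ.map hσ).cast (map_one σ).symm hg.symm).symm)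

/-- The homotopy class (rel endpoints) of a loop, as an element of the fundamental group. -/
def loopClass {X : Type u} [TopologicalSpace X] {x : X} (γ : Path x x) :
    FundamentalGroup X x :=
  FundamentalGroup.fromPath (X := TopCat.of X) ⟦γ⟧

/-- The set `π_g ⊆ π₁(G,e)` of classes `[γ^σ]`, as `γ` ranges over paths from `e` to `g`. -/
def piSet {G : Type u} [Group G] [TopologicalSpace G] (σ : G →* G) (hσ : Continuous σ)
    (g : G) (hg : σ g = g) : Set (FundamentalGroup G (1 : G)) :=
  Set.range fun γ : Path (1 : G) g => loopClass (sigmaLoop σ hσ hg γ)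

/-- The set `π_K = ⋃_{k ∈ K} π_k ⊆ π₁(G,e)`. -/
def piUnion {G : Type u} [Group G] [TopologicalSpace G] (σ : G →* G) (hσ : Continuous σ)
    (K : Subgroup G) (hK : ∀ k ∈ K, σ k = k) : Set (FundamentalGroup G (1 : G)) :=
  ⋃ k : K, piSet σ hσ (k : G) (hK (k : G) k.2)

/-- The map induced on fundamental groups by a continuous (base-point preserving) map,
`[α] ↦ [f ∘ α]`. -/
def inducedStar {X : Type u} {Y : Type v} [TopologicalSpace X] [TopologicalSpace Y]
    (f : X → Y) (hf : Continuous f) {x : X} {y : Y} (hxy : f x = y)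
    (p : FundamentalGroup X x) : FundamentalGroup Y y :=
  FundamentalGroup.fromPath (X := TopCat.of Y)
    (hxy ▸ Path.Homotopic.Quotient.map (FundamentalGroup.toPath (X := TopCat.of X) p) ⟨f, hf⟩)

/-- The identity component of a topological group is a normal subgroup. -/
instance connectedComponentOfOne_normal {H : Type u} [Group H] [TopologicalSpace H]
    [IsTopologicalGroup H] : (Subgroup.connectedComponentOfOne H).Normal where
  conj_mem n hn g := by
    have hc : Continuous fun x : H => g * x * g⁻¹ := by continuity
    have h1 : (fun x : H => g * x * g⁻¹) '' connectedComponent (1 : H) ⊆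
        connectedComponent (g * 1 * g⁻¹) :=
      hc.image_connectedComponent_subset 1
    have h2 : g * n * g⁻¹ ∈ connectedComponent (g * 1 * g⁻¹) := h1 ⟨n, hn, rfl⟩
    have h3 : g * 1 * g⁻¹ = (1 : H) := by group
    rw [h3] at h2
    exact h2


lemma loopClass_inv {X : Type u} [TopologicalSpace X] {x : X} (p : Path x x) :
    (loopClass p)⁻¹ = loopClass p.symm :=
  rfl

lemma sigmaLoop_symm {G : Type u} [Group G] [TopologicalSpace G] (σ : G →* G)
    (hσ : Continuous σ) (hσ2 : ∀ g : G, σ (σ g) = g) {g : G} (hg : σ g = g)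
    (γ : Path (1 : G) g) :
    (sigmaLoop σ hσ hg γ).symm =
      sigmaLoop σ hσ hg ((γ.map hσ).cast (map_one σ).symm hg.symm) := by
  set δ : Path (1 : G) g := (γ.map hσ).cast (map_one σ).symm hg.symm with hδ
  have hmap : ((δ.map hσ).cast (map_one σ).symm hg.symm) = γ := by
    ext t
    simp [hδ, Path.cast, hσ2]
  rw [sigmaLoop, sigmaLoop, hmap, Path.trans_symm, Path.symm_symm]

theorem piSet_inv_mem
    {G : Type u} [Group G] [TopologicalSpace G]
    (σ : G →* G) (hσ : Continuous σ)
    (hσ2 : ∀ g : G, σ (σ g) = g)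
    (g : G) (hg : σ g = g) (x : FundamentalGroup G (1 : G)) :
    x ∈ piSet σ hσ g hg → x⁻¹ ∈ piSet σ hσ g hg := by
  rintro ⟨γ, rfl⟩
  exact ⟨(γ.map hσ).cast (map_one σ).symm hg.symm,
    by show loopClass _ = _; rw [← sigmaLoop_symm σ hσ hσ2 hg γ, ← loopClass_inv]⟩

theorem piSet_inv_mem_iff
    {E : Type*} [NormedAddCommGroup E] [NormedSpace ℝ E]
    {G : Type*} [Group G] [TopologicalSpace G] [ChartedSpace E G]
    [LieGroup 𝓘(ℝ, E) ((⊤ : ℕ∞) : WithTop ℕ∞) G] [ConnectedSpace G]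
    (σ : G →* G) (hσ : ContMDiff 𝓘(ℝ, E) 𝓘(ℝ, E) (⊤ : ℕ∞) ⇑σ)
    (hσ2 : ∀ g : G, σ (σ g) = g)
    (g : G) (hg : σ g = g) (x : FundamentalGroup G (1 : G)) :
    x ∈ piSet σ hσ.continuous g hg ↔ x⁻¹ ∈ piSet σ hσ.continuous g hg := by
  constructor
  · exact piSet_inv_mem σ hσ.continuous hσ2 g hg x
  · intro h
    simpa using piSet_inv_mem σ hσ.continuous hσ2 g hg x⁻¹ h


end
end

section
/- For every g ∈ G^σ, one has π_g = π_{g⁻¹} as subsets of π₁(G,e). -/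
noncomputable section

open scoped Manifold Pointwise

attribute [local instance] Path.Homotopic.setoid

universe u v

section RotationHomotopy

variable {G : Type u} [Group G] [TopologicalSpace G] [IsTopologicalGroup G]

/-- Given a path `γ` from `e` to `g` with `σ g = g`, the path `t ↦ σ(γ(1-t))·g⁻¹`
from `e` to `g⁻¹`. -/
def phiPath (σ : G →* G) (hσ : Continuous σ) {g : G} (hg : σ g = g) (γ : Path (1 : G) g) :
    Path (1 : G) g⁻¹ where
  toFun t := σ (γ (unitInterval.symm t)) * g⁻¹
  continuous_toFun :=
    ((hσ.comp (γ.continuous.comp unitInterval.continuous_symm)).mul continuous_const)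
  source' := by
    simp only [unitInterval.symm_zero, Path.target, hg, mul_inv_cancel]
  target' := by
    simp only [unitInterval.symm_one, Path.source, map_one, one_mul]

theorem sigmaLoop_extend_eq (σ : G →* G) (hσ : Continuous σ) {g : G} (hg : σ g = g)
    (γ : Path (1 : G) g) {x : ℝ} (hx0 : 0 ≤ x) (hx1 : x ≤ 1) :
    (sigmaLoop σ hσ hg γ).extend x =
      if x ≤ 1 / 2 then γ.extend (2 * x) else σ (γ.extend (2 - 2 * x)) := by
  rw [Path.extend_apply _ ⟨hx0, hx1⟩]
  unfold sigmaLoop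
  rw [Path.trans_apply]
  split_ifs with h
  · rw [Path.extend_apply γ ⟨by positivity, by linarith⟩]
  · push_neg at h
    rw [Path.symm_apply]
    show ((γ.map hσ).cast (map_one σ).symm hg.symm) _ = _
    rw [show (((γ.map hσ).cast (map_one σ).symm hg.symm) : unitInterval → G) = ((γ.map hσ) : unitInterval → G) from
      Path.cast_coe _ _ _, Path.map_coe]
    simp only [Function.comp_apply]
    rw [Path.extend_apply γ (show 2 - 2 * x ∈ Set.Icc (0:ℝ) 1 from ⟨by linarith, by linarith⟩)]
    refine congrArg σ (congrArg γ (Subtype.ext ?_))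
    show (1 : ℝ) - (2 * x - 1) = 2 - 2 * x
    ring

theorem sigmaLoop_phi_extend_eq (σ : G →* G) (hσ : Continuous σ) (hσ2 : ∀ y : G, σ (σ y) = y)
    {g : G} (hg : σ g = g) (hg' : σ g⁻¹ = g⁻¹)
    (γ : Path (1 : G) g) {x : ℝ} (hx0 : 0 ≤ x) (hx1 : x ≤ 1) :
    (sigmaLoop σ hσ hg' (phiPath σ hσ hg γ)).extend x =
      if x ≤ 1 / 2 then σ (γ.extend (1 - 2 * x)) * g⁻¹ else γ.extend (2 * x - 1) * g⁻¹ := by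
  rw [Path.extend_apply _ ⟨hx0, hx1⟩]
  unfold sigmaLoop
  rw [Path.trans_apply]
  split_ifs with h
  · show σ (γ (unitInterval.symm _)) * g⁻¹ = _
    rw [Path.extend_apply γ (show 1 - 2 * x ∈ Set.Icc (0:ℝ) 1 from ⟨by linarith, by linarith⟩)]
    refine congrArg (fun z => z * g⁻¹) (congrArg σ (congrArg γ (Subtype.ext ?_)))
    show (1 : ℝ) - (2 * x) = 1 - 2 * x
    ring
  · push_neg at h
    rw [Path.symm_apply]
    show (((phiPath σ hσ hg γ).map hσ).cast (map_one σ).symm hg'.symm) _ = _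
    rw [show ((((phiPath σ hσ hg γ).map hσ).cast (map_one σ).symm hg'.symm) : unitInterval → G)
        = (((phiPath σ hσ hg γ).map hσ) : unitInterval → G) from Path.cast_coe _ _ _, Path.map_coe]
    simp only [Function.comp_apply]
    show σ ((phiPath σ hσ hg γ) _) = _
    show σ (σ (γ (unitInterval.symm (unitInterval.symm _))) * g⁻¹) = _
    rw [unitInterval.symm_symm, map_mul, hσ2, map_inv, hg,
      Path.extend_apply γ (show 2 * x - 1 ∈ Set.Icc (0:ℝ) 1 from ⟨by linarith, by linarith⟩)]

theorem sigmaLoop_phi_homotopic (σ : G →* G) (hσ : Continuous σ) (hσ2 : ∀ y : G, σ (σ y) = y)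
    {g : G} (hg : σ g = g) (hg' : σ g⁻¹ = g⁻¹) (γ : Path (1 : G) g) :
    (sigmaLoop σ hσ hg γ).Homotopic (sigmaLoop σ hσ hg' (phiPath σ hσ hg γ)) := by
  set L : Path (1 : G) 1 := sigmaLoop σ hσ hg γ with hL
  set F : ℝ → G := fun x => if x ≤ 1 then L.extend x else L.extend (x - 1) with hF
  have hFc : Continuous F := by
    refine Continuous.if_le L.continuous_extend
      (L.continuous_extend.comp (continuous_id.sub continuous_const)) continuous_id
      continuous_const ?_
    intro x hx
    rw [hx]
    norm_num
  refine ⟨{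
    toFun := fun p => F ((p.2 : ℝ) + (p.1 : ℝ) / 2) * (γ.extend (p.1 : ℝ))⁻¹
    continuous_toFun := by
      refine Continuous.mul (hFc.comp ?_) (Continuous.inv (γ.continuous_extend.comp ?_))
      · exact ((continuous_subtype_val.comp continuous_snd).add
          ((continuous_subtype_val.comp continuous_fst).div_const 2))
      · exact continuous_subtype_val.comp continuous_fst
    map_zero_left := ?_
    map_one_left := ?_
    prop' := ?_ }⟩
  · -- H(0, t) = L t
    intro t
    have ht0 : (0:ℝ) ≤ (t : ℝ) := t.2.1
    have ht1 : (t : ℝ) ≤ 1 := t.2.2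
    show F ((t : ℝ) + ((0 : unitInterval) : ℝ) / 2) * (γ.extend ((0 : unitInterval) : ℝ))⁻¹ = L t
    rw [Set.Icc.coe_zero]
    simp only [hF, zero_div, add_zero, Path.extend_zero, inv_one, mul_one, if_pos ht1]
    rw [Path.extend_apply L ⟨ht0, ht1⟩]
  · -- H(1, t) = L2 t
    intro t
    have ht0 : (0:ℝ) ≤ (t : ℝ) := t.2.1
    have ht1 : (t : ℝ) ≤ 1 := t.2.2
    show F ((t : ℝ) + ((1 : unitInterval) : ℝ) / 2) * (γ.extend ((1 : unitInterval) : ℝ))⁻¹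
        = (sigmaLoop σ hσ hg' (phiPath σ hσ hg γ)) t
    rw [Set.Icc.coe_one, Path.extend_one,
      ← Path.extend_apply (sigmaLoop σ hσ hg' (phiPath σ hσ hg γ)) ⟨ht0, ht1⟩,
      sigmaLoop_phi_extend_eq σ hσ hσ2 hg hg' γ ht0 ht1]
    simp only [hF]
    by_cases h : (t : ℝ) ≤ 1 / 2
    · rw [if_pos (by linarith : (t : ℝ) + 1 / 2 ≤ 1), if_pos h,
        sigmaLoop_extend_eq σ hσ hg γ (by linarith) (by linarith)]
      by_cases h0 : (t : ℝ) + 1 / 2 ≤ 1 / 2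
      · have ht : (t : ℝ) = 0 := le_antisymm (by linarith) ht0
        rw [if_pos h0, ht]
        norm_num [hg]
      · rw [if_neg h0]
        congr 2
        ring
    · push_neg at h
      rw [if_neg (by push_neg; linarith : ¬ ((t : ℝ) + 1 / 2 ≤ 1)), if_neg (by linarith)]
      have : (t : ℝ) + 1 / 2 - 1 = (t : ℝ) - 1 / 2 := by ring
      rw [this, sigmaLoop_extend_eq σ hσ hg γ (by linarith) (by linarith),
        if_pos (by linarith : (t : ℝ) - 1 / 2 ≤ 1 / 2)]
      congr 2
      ring
  · -- rel {0, 1}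
    intro s t ht
    have hs0 : (0:ℝ) ≤ (s : ℝ) := s.2.1
    have hs1 : (s : ℝ) ≤ 1 := s.2.2
    have key0 : L.extend ((s : ℝ) / 2) = γ.extend (s : ℝ) := by
      rw [sigmaLoop_extend_eq σ hσ hg γ (by linarith) (by linarith),
        if_pos (by linarith : (s : ℝ) / 2 ≤ 1 / 2)]
      congr 1
      ring
    rcases ht with ht | ht
    · subst ht
      show F (((0 : unitInterval) : ℝ) + (s : ℝ) / 2) * (γ.extend (s : ℝ))⁻¹ = L 0
      rw [Set.Icc.coe_zero, zero_add]
      simp only [hF, if_pos (by linarith : (s : ℝ) / 2 ≤ 1)]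
      rw [key0, mul_inv_cancel, L.source]
    · rw [Set.mem_singleton_iff] at ht
      subst ht
      show F (((1 : unitInterval) : ℝ) + (s : ℝ) / 2) * (γ.extend (s : ℝ))⁻¹ = L 1
      rw [Set.Icc.coe_one, L.target]
      simp only [hF]
      by_cases h : (1 : ℝ) + (s : ℝ) / 2 ≤ 1
      · have hs : (s : ℝ) = 0 := le_antisymm (by linarith) hs0
        simp only [if_pos h, hs]
        norm_num
      · simp only [if_neg h]
        have : (1 : ℝ) + (s : ℝ) / 2 - 1 = (s : ℝ) / 2 := by ring
        rw [this]
        rw [key0, mul_inv_cancel]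

theorem loopClass_phi_eq (σ : G →* G) (hσ : Continuous σ) (hσ2 : ∀ y : G, σ (σ y) = y)
    {g : G} (hg : σ g = g) (hg' : σ g⁻¹ = g⁻¹) (γ : Path (1 : G) g) :
    loopClass (sigmaLoop σ hσ hg' (phiPath σ hσ hg γ)) = loopClass (sigmaLoop σ hσ hg γ) := by
  unfold loopClass
  exact congrArg _ (Quotient.sound (sigmaLoop_phi_homotopic σ hσ hσ2 hg hg' γ).symm)

theorem piSet_subset_inv (σ : G →* G) (hσ : Continuous σ) (hσ2 : ∀ y : G, σ (σ y) = y)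
    (g : G) (hg : σ g = g) (hg' : σ g⁻¹ = g⁻¹) :
    piSet σ hσ g hg ⊆ piSet σ hσ g⁻¹ hg' := by
  rintro x ⟨γ, rfl⟩
  exact ⟨phiPath σ hσ hg γ, loopClass_phi_eq σ hσ hσ2 hg hg' γ⟩

theorem piSet_congr (σ : G →* G) (hσ : Continuous σ) {a b : G} (h : a = b)
    (ha : σ a = a) (hb : σ b = b) : piSet σ hσ a ha = piSet σ hσ b hb := by
  subst h
  rfl

end RotationHomotopy


theorem piSet_eq_piSet_inv
    {E : Type*} [NormedAddCommGroup E] [NormedSpace ℝ E]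
    {G : Type*} [Group G] [TopologicalSpace G] [ChartedSpace E G]
    [LieGroup 𝓘(ℝ, E) (⊤ : ℕ∞) G] [ConnectedSpace G]
    (σ : G →* G) (hσ : ContMDiff 𝓘(ℝ, E) 𝓘(ℝ, E) (⊤ : ℕ∞) ⇑σ)
    (hσ2 : ∀ g : G, σ (σ g) = g)
    (g : G) (hg : σ g = g) :
    piSet σ hσ.continuous g hg =
      piSet σ hσ.continuous g⁻¹ (by rw [map_inv, hg]) := by
  haveI : IsTopologicalGroup G := topologicalGroup_of_lieGroup (I := 𝓘(ℝ, E)) (n := (⊤ : ℕ∞))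
  have hg' : σ g⁻¹ = g⁻¹ := by rw [map_inv, hg]
  have hg'' : σ g⁻¹⁻¹ = g⁻¹⁻¹ := by rw [map_inv, hg']
  refine Set.Subset.antisymm (piSet_subset_inv σ hσ.continuous hσ2 g hg hg') ?_
  have h2 := piSet_subset_inv σ hσ.continuous hσ2 g⁻¹ hg' hg''
  rwa [piSet_congr σ hσ.continuous (inv_inv g) hg'' hg] at h2

end
end

section
/- For all g₁, g₂ ∈ G^σ and every x ∈ π_{g₁}, one has x·π_{g₂} = π_{g₁g₂} (where x·π_{g₂} = {x·y : y ∈ π_{g₂}}); consequently the pointwise product satisfies π_{g₁}·π_{g₂} = π_{g₁g₂}. -/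
noncomputable section

open scoped Manifold Pointwise

attribute [local instance] Path.Homotopic.setoid

universe u v

section AuxLemmas

variable {G : Type u} [Group G] [TopologicalSpace G] [IsTopologicalGroup G]

/-- Pointwise product of two paths in a topological group. -/
def pathMul {a b c d : G} (α : Path a b) (β : Path c d) : Path (a * c) (b * d) where
  toFun t := α t * β t
  continuous_toFun := α.continuous.mul β.continuous
  source' := by simp
  target' := by simp

@[simp] lemma pathMul_apply {a b c d : G} (α : Path a b) (β : Path c d) (t : unitInterval) :
    pathMul α β t = α t * β t := rfl

lemma pathMul_quot {a b c d : G} (α α' : Path a b) (β β' : Path c d)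
    (hα : (⟦α⟧ : Path.Homotopic.Quotient a b) = ⟦α'⟧)
    (hβ : (⟦β⟧ : Path.Homotopic.Quotient c d) = ⟦β'⟧) :
    (⟦pathMul α β⟧ : Path.Homotopic.Quotient (a * c) (b * d)) = ⟦pathMul α' β'⟧ := by
  have key : ∀ (α₀ : Path a b) (β₀ : Path c d),
      (⟦pathMul α₀ β₀⟧ : Path.Homotopic.Quotient (a * c) (b * d)) =
        Path.Homotopic.Quotient.map (Path.Homotopic.prod ⟦α₀⟧ ⟦β₀⟧)
          ⟨fun p => p.1 * p.2, continuous_mul⟩ := by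
    intro α₀ β₀
    rfl
  rw [key α β, key α' β', hα, hβ]

lemma path_cast_homotopic {X : Type u} [TopologicalSpace X] {a b a' b' : X}
    (h1 : a' = a) (h2 : b' = b) {p q : Path a b} (h : p.Homotopic q) :
    (p.cast h1 h2).Homotopic (q.cast h1 h2) := by
  subst h1; subst h2; exact h

lemma quot_cast {X : Type u} [TopologicalSpace X] {a b a' b' : X}
    (h1 : a' = a) (h2 : b' = b) {p q : Path a b}
    (h : (⟦p⟧ : Path.Homotopic.Quotient a b) = ⟦q⟧) :
    (⟦p.cast h1 h2⟧ : Path.Homotopic.Quotient a' b') = ⟦q.cast h1 h2⟧ :=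
  Quotient.sound (path_cast_homotopic h1 h2 (Quotient.exact h))

lemma fromPath_mul {X : Type u} [TopologicalSpace X] {x : X}
    (p q : Path.Homotopic.Quotient x x) :
    (FundamentalGroup.fromPath (X := TopCat.of X) p) *
      FundamentalGroup.fromPath (X := TopCat.of X) q
      = FundamentalGroup.fromPath (X := TopCat.of X) (q.trans p) :=
  rfl

lemma pathMul_reflTrans_transRefl (α β : Path (1:G) 1) :
    pathMul ((Path.refl (1:G)).trans α) (β.trans (Path.refl (1:G)))
      = (β.trans α).cast (one_mul 1) (one_mul 1) := by
  ext t
  simp only [pathMul_apply, Path.cast_coe, Path.trans_apply]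
  split_ifs <;> simp

lemma loopClass_pathMul (α β : Path (1:G) 1) :
    loopClass ((pathMul α β).cast (one_mul (1:G)).symm (one_mul (1:G)).symm)
      = loopClass α * loopClass β := by
  have h1 : (⟦pathMul α β⟧ : Path.Homotopic.Quotient ((1:G)*1) ((1:G)*1)) =
      ⟦pathMul ((Path.refl (1:G)).trans α) (β.trans (Path.refl (1:G)))⟧ := by
    have e1 : (⟦(Path.refl (1:G)).trans α⟧ : Path.Homotopic.Quotient (1:G) 1) = ⟦α⟧ :=
      Quotient.sound ⟨Path.Homotopy.reflTrans α⟩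
    have e2 : (⟦β.trans (Path.refl (1:G))⟧ : Path.Homotopic.Quotient (1:G) 1) = ⟦β⟧ :=
      Quotient.sound ⟨Path.Homotopy.transRefl β⟩
    exact pathMul_quot _ _ _ _ e1.symm e2.symm
  have h3 : (((β.trans α).cast (one_mul (1:G)) (one_mul 1)).cast
      (one_mul (1:G)).symm (one_mul 1).symm) = β.trans α := by
    ext t; simp; rfl
  calc loopClass ((pathMul α β).cast (one_mul (1:G)).symm (one_mul 1).symm)
      = FundamentalGroup.fromPath (X := TopCat.of G)
          ⟦(pathMul α β).cast (one_mul (1:G)).symm (one_mul 1).symm⟧ := rfl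
    _ = FundamentalGroup.fromPath (X := TopCat.of G) ⟦β.trans α⟧ := by
        rw [quot_cast _ _ h1, pathMul_reflTrans_transRefl, h3]
    _ = FundamentalGroup.fromPath (X := TopCat.of G)
          (Path.Homotopic.Quotient.trans ⟦β⟧ ⟦α⟧) := rfl
    _ = loopClass α * loopClass β := (fromPath_mul _ _).symm

lemma sigmaLoop_pathMul (σ : G →* G) (hσ : Continuous σ) {g₁ g₂ : G}
    (hg₁ : σ g₁ = g₁) (hg₂ : σ g₂ = g₂) (h12 : σ (g₁ * g₂) = g₁ * g₂)
    (γ₁ : Path (1:G) g₁) (γ₂ : Path (1:G) g₂) :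
    sigmaLoop σ hσ h12 ((pathMul γ₁ γ₂).cast (one_mul (1:G)).symm rfl)
      = (pathMul (sigmaLoop σ hσ hg₁ γ₁) (sigmaLoop σ hσ hg₂ γ₂)).cast
        (one_mul (1:G)).symm (one_mul (1:G)).symm := by
  ext t
  simp only [sigmaLoop, Path.cast_coe, pathMul_apply, Path.trans_apply]
  split_ifs with h
  · simp [Path.cast_coe]
  · simp [Path.symm_apply, Path.cast_coe, Path.map_coe, map_mul]

lemma key_loopClass (σ : G →* G) (hσ : Continuous σ) {g₁ g₂ : G}
    (hg₁ : σ g₁ = g₁) (hg₂ : σ g₂ = g₂) (h12 : σ (g₁ * g₂) = g₁ * g₂)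
    (γ₁ : Path (1:G) g₁) (γ₂ : Path (1:G) g₂) :
    loopClass (sigmaLoop σ hσ h12 ((pathMul γ₁ γ₂).cast (one_mul (1:G)).symm rfl))
      = loopClass (sigmaLoop σ hσ hg₁ γ₁) * loopClass (sigmaLoop σ hσ hg₂ γ₂) := by
  rw [sigmaLoop_pathMul σ hσ hg₁ hg₂ h12 γ₁ γ₂, loopClass_pathMul]

end AuxLemmas

/-- A charted space modelled on a locally path-connected space is locally path-connected. -/
theorem myChartedLocPathConnected {H : Type u} {M : Type v} [TopologicalSpace H]
    [TopologicalSpace M] [ChartedSpace H M] [LocallyPathConnectedSpace H] :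
    LocallyPathConnectedSpace M := by
  have b : ∀ x : M, (nhds x).HasBasis
      (fun s ↦ s ∈ nhds (chartAt H x x) ∧ IsPathConnected s ∧ s ⊆ (chartAt H x).target)
      fun s ↦ (chartAt H x).symm '' s := fun x ↦ by
    rw [← (chartAt H x).symm_map_nhds_eq (mem_chart_source H x)]
    exact ((path_connected_basis (chartAt H x x)).hasBasis_self_subset
      (chart_target_mem_nhds H x)).map _
  refine LocPathConnectedSpace.of_bases b ?_
  rintro x s ⟨-, hs, hsub⟩
  exact hs.image' ((chartAt H x).continuousOn_symm.mono hsub)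

theorem smul_piSet_eq_piSet_mul
    {E : Type*} [NormedAddCommGroup E] [NormedSpace ℝ E]
    {G : Type*} [Group G] [TopologicalSpace G] [ChartedSpace E G]
    [LieGroup 𝓘(ℝ, E) (⊤ : ℕ∞) G] [ConnectedSpace G]
    (σ : G →* G) (hσ : ContMDiff 𝓘(ℝ, E) 𝓘(ℝ, E) (⊤ : ℕ∞) ⇑σ)
    (hσ2 : ∀ g : G, σ (σ g) = g)
    (g₁ g₂ : G) (hg₁ : σ g₁ = g₁) (hg₂ : σ g₂ = g₂) :
    (∀ x ∈ piSet σ hσ.continuous g₁ hg₁,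
      x • piSet σ hσ.continuous g₂ hg₂ =
        piSet σ hσ.continuous (g₁ * g₂) (by rw [map_mul, hg₁, hg₂])) ∧
    piSet σ hσ.continuous g₁ hg₁ * piSet σ hσ.continuous g₂ hg₂ =
      piSet σ hσ.continuous (g₁ * g₂) (by rw [map_mul, hg₁, hg₂]) := by
  haveI hTG : IsTopologicalGroup G := topologicalGroup_of_lieGroup (I := 𝓘(ℝ, E)) (n := (⊤ : ℕ∞))
  have part1 : ∀ x ∈ piSet σ hσ.continuous g₁ hg₁,
      x • piSet σ hσ.continuous g₂ hg₂ =
        piSet σ hσ.continuous (g₁ * g₂) (by rw [map_mul, hg₁, hg₂]) := by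
    rintro x ⟨γ₁, rfl⟩
    ext z
    simp only [piSet, Set.mem_smul_set, Set.mem_range]
    constructor
    · rintro ⟨y, ⟨γ₂, rfl⟩, rfl⟩
      refine ⟨(pathMul γ₁ γ₂).cast (one_mul (1:G)).symm rfl, ?_⟩
      rw [smul_eq_mul]
      exact key_loopClass σ hσ.continuous hg₁ hg₂ (by rw [map_mul, hg₁, hg₂]) γ₁ γ₂
    · rintro ⟨γ, rfl⟩
      let γ₂ : Path (1:G) g₂ :=
        { toFun := fun t => (γ₁ t)⁻¹ * γ t
          continuous_toFun := γ₁.continuous.inv.mul γ.continuous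
          source' := by simp
          target' := by simp }
      have hmul : (pathMul γ₁ γ₂).cast (one_mul (1:G)).symm rfl = γ := by
        ext t
        simp [pathMul_apply, Path.cast_coe, γ₂, mul_inv_cancel_left]
      refine ⟨loopClass (sigmaLoop σ hσ.continuous hg₂ γ₂), ⟨γ₂, rfl⟩, ?_⟩
      rw [smul_eq_mul, ← key_loopClass σ hσ.continuous hg₁ hg₂
        (by rw [map_mul, hg₁, hg₂]) γ₁ γ₂, hmul]
  refine ⟨part1, ?_⟩
  haveI : LocallyPathConnectedSpace G := myChartedLocPathConnected (H := E)
  haveI : PathConnectedSpace G := pathConnectedSpace_iff_connectedSpace.mpr inferInstance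
  obtain ⟨γ₁⟩ : Nonempty (Path (1:G) g₁) := ⟨PathConnectedSpace.somePath _ _⟩
  have hx : loopClass (sigmaLoop σ hσ.continuous hg₁ γ₁) ∈ piSet σ hσ.continuous g₁ hg₁ :=
    ⟨γ₁, rfl⟩
  ext z
  constructor
  · intro hz
    rw [Set.mem_mul] at hz
    obtain ⟨a, ha, b, hb, rfl⟩ := hz
    rw [← part1 a ha]
    exact Set.smul_mem_smul_set hb
  · intro hz
    rw [← part1 _ hx, Set.mem_smul_set] at hz
    obtain ⟨y, hy, rfl⟩ := hz
    exact Set.mul_mem_mul hx hy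

end
end

section
/- The set π_K = ⋃_{k∈K} π_k is a subgroup of the fundamental group π₁(G,e): it contains the identity class, is closed under inversion, and is closed under multiplication. -/
noncomputable section

open scoped Manifold Pointwise

attribute [local instance] Path.Homotopic.setoid

universe u v

section AuxLemmas

set_option linter.unusedSectionVars false

variable {X : Type u} [TopologicalSpace X]

theorem loopClass_eq {x : X} {α β : Path x x} (h : α.Homotopic β) :
    loopClass α = loopClass β :=
  congrArg (FundamentalGroup.fromPath (X := TopCat.of X)) (Quotient.sound h)

theorem loopClass_refl {x : X} : loopClass (Path.refl x) = 1 :=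
  rfl

theorem loopClass_mul {x : X} (α β : Path x x) :
    loopClass α * loopClass β = loopClass (β.trans α) :=
  rfl

theorem homotopic_cast {x y x' y' : X} {p q : Path x y} (h : p.Homotopic q)
    (h1 : x' = x) (h2 : y' = y) : (p.cast h1 h2).Homotopic (q.cast h1 h2) := by
  subst h1; subst h2
  obtain ⟨F⟩ := h
  exact ⟨F⟩

variable {G : Type u} [Group G] [TopologicalSpace G] [IsTopologicalGroup G]

theorem homotopic_mul {a b c d : G} {p₁ q₁ : Path a b} {p₂ q₂ : Path c d}
    (h₁ : p₁.Homotopic q₁) (h₂ : p₂.Homotopic q₂) : (p₁.mul p₂).Homotopic (q₁.mul q₂) := by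
  obtain ⟨F⟩ := h₁; obtain ⟨F'⟩ := h₂
  exact ⟨(Path.Homotopic.prodHomotopy F F').map ⟨fun p => p.1 * p.2, continuous_mul⟩⟩

theorem trans_eq_mul_cast (α β : Path (1 : G) 1) :
    β.trans α = (((Path.refl (1:G)).trans α).mul (β.trans (Path.refl (1:G)))).cast
      (one_mul (1:G)).symm (one_mul (1:G)).symm := by
  ext t
  simp only [Path.cast_coe, Path.mul_apply, Path.trans_apply, Path.refl_apply]
  split_ifs <;> simp

theorem loopClass_mul_cast (α β : Path (1 : G) 1) :
    loopClass ((α.mul β).cast (one_mul (1:G)).symm (one_mul (1:G)).symm) =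
      loopClass α * loopClass β := by
  rw [loopClass_mul, trans_eq_mul_cast]
  exact (loopClass_eq (homotopic_cast
    (homotopic_mul ⟨Path.Homotopy.reflTrans α⟩ ⟨Path.Homotopy.transRefl β⟩) _ _)).symm

theorem sigmaLoop_one (σ : G →* G) (hσc : Continuous σ) :
    sigmaLoop σ hσc (map_one σ) (Path.refl (1:G)) = Path.refl (1:G) := by
  ext t
  simp only [sigmaLoop, Path.trans_apply, Path.refl_apply, Path.symm_apply, Path.cast_coe,
    Path.map_coe, Function.comp_apply]
  split_ifs <;> simp

theorem sigmaLoop_mul (σ : G →* G) (hσc : Continuous σ) {k l : G} (hk : σ k = k) (hl : σ l = l)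
    (γ : Path (1:G) k) (δ : Path (1:G) l) :
    sigmaLoop σ hσc (show σ (k*l) = k*l by rw [map_mul, hk, hl])
        ((γ.mul δ).cast (one_mul (1:G)).symm rfl) =
      ((sigmaLoop σ hσc hk γ).mul (sigmaLoop σ hσc hl δ)).cast
        (one_mul (1:G)).symm (one_mul (1:G)).symm := by
  ext t
  simp only [sigmaLoop, Path.trans_apply, Path.mul_apply, Path.symm_apply, Path.cast_coe,
    Path.map_coe, Function.comp_apply]
  split_ifs <;> simp [map_mul]

theorem sigmaLoop_inv_mul (σ : G →* G) (hσc : Continuous σ) {k : G} (hk : σ k = k)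
    (hki : σ k⁻¹ = k⁻¹) (γ : Path (1:G) k) :
    ((sigmaLoop σ hσc hk γ).mul
        (sigmaLoop σ hσc hki ((γ.map continuous_inv).cast inv_one.symm rfl))).cast
      (one_mul (1:G)).symm (one_mul (1:G)).symm = Path.refl (1:G) := by
  ext t
  simp only [sigmaLoop, Path.trans_apply, Path.mul_apply, Path.symm_apply, Path.cast_coe,
    Path.map_coe, Function.comp_apply, Path.refl_apply]
  split_ifs <;> simp [map_inv]

end AuxLemmas

theorem piUnion_is_subgroup
    {E : Type*} [NormedAddCommGroup E] [NormedSpace ℝ E]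
    {G : Type*} [Group G] [TopologicalSpace G] [ChartedSpace E G]
    [LieGroup 𝓘(ℝ, E) (⊤ : ℕ∞) G] [ConnectedSpace G]
    (σ : G →* G) (hσ : ContMDiff 𝓘(ℝ, E) 𝓘(ℝ, E) (⊤ : ℕ∞) ⇑σ)
    (hσ2 : ∀ g : G, σ (σ g) = g)
    (K : Subgroup G) (hK : ∀ k ∈ K, σ k = k)
    (hKopen : IsOpen {x : ↥(sigmaFixed σ) | (x : G) ∈ K}) :
    (1 : FundamentalGroup G (1 : G)) ∈ piUnion σ hσ.continuous K hK ∧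
    (∀ x ∈ piUnion σ hσ.continuous K hK, x⁻¹ ∈ piUnion σ hσ.continuous K hK) ∧
    (∀ x ∈ piUnion σ hσ.continuous K hK, ∀ y ∈ piUnion σ hσ.continuous K hK,
      x * y ∈ piUnion σ hσ.continuous K hK) := by
  haveI : IsTopologicalGroup G := topologicalGroup_of_lieGroup (I := 𝓘(ℝ, E)) (n := ((⊤ : ℕ∞) : WithTop ℕ∞))
  refine ⟨?_, ?_, ?_⟩
  · -- identity
    apply Set.mem_iUnion.mpr
    refine ⟨(1 : K), ⟨Path.refl (1 : G), ?_⟩⟩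
    show loopClass (sigmaLoop σ hσ.continuous (map_one σ) (Path.refl (1 : G))) = 1
    rw [sigmaLoop_one σ hσ.continuous, loopClass_refl]
  · -- inverses
    rintro x hx
    obtain ⟨k, hxk⟩ := Set.mem_iUnion.mp hx
    obtain ⟨γ, rfl⟩ := hxk
    have hk : σ (k : G) = (k : G) := hK _ k.2
    have hki : σ ((k : G))⁻¹ = ((k : G))⁻¹ := hK _ (K.inv_mem k.2)
    have h1 : loopClass (sigmaLoop σ hσ.continuous hk γ) *
        loopClass (sigmaLoop σ hσ.continuous hki
          ((γ.map continuous_inv).cast inv_one.symm rfl)) = 1 := by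
      rw [← loopClass_mul_cast, sigmaLoop_inv_mul σ hσ.continuous hk hki γ, loopClass_refl]
    apply Set.mem_iUnion.mpr
    refine ⟨k⁻¹, ⟨(γ.map continuous_inv).cast inv_one.symm rfl, ?_⟩⟩
    exact (inv_eq_of_mul_eq_one_right h1).symm
  · -- products
    rintro x hx y hy
    obtain ⟨k, hxk⟩ := Set.mem_iUnion.mp hx
    obtain ⟨γ, rfl⟩ := hxk
    obtain ⟨l, hyl⟩ := Set.mem_iUnion.mp hy
    obtain ⟨δ, rfl⟩ := hyl
    have hk : σ (k : G) = (k : G) := hK _ k.2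
    have hl : σ (l : G) = (l : G) := hK _ l.2
    apply Set.mem_iUnion.mpr
    refine ⟨k * l, ⟨(γ.mul δ).cast (one_mul (1 : G)).symm rfl, ?_⟩⟩
    exact (congrArg loopClass (sigmaLoop_mul σ hσ.continuous hk hl γ δ)).trans
      (loopClass_mul_cast _ _)

end
end

section
/- Let G' be a connected real Lie group, π : G' → G a smooth surjective group homomorphism that is a topological covering map, and σ' : G' → G' a smooth involutive automorphism with π∘σ' = σ∘π and π⁻¹(K) = (G')^{σ'} := {h ∈ G' : σ'(h) = h}. Then the map φ : G/K → G' given by φ(gK) = g'·σ'(g')⁻¹, where g' is any element of π⁻¹(g), is well-defined (independent of the choices of coset representative g and of lift g'), continuous, and injective, and its image is exactly the set P' = {h·σ'(h)⁻¹ : h ∈ G'}. -/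
noncomputable section

open scoped Manifold Pointwise

attribute [local instance] Path.Homotopic.setoid

universe u v

theorem coset_space_embeds_as_twisted_orbit
    {E : Type*} [NormedAddCommGroup E] [NormedSpace ℝ E]
    {G : Type*} [Group G] [TopologicalSpace G] [ChartedSpace E G]
    [LieGroup 𝓘(ℝ, E) (⊤ : ℕ∞) G] [ConnectedSpace G]
    (σ : G →* G) (hσ : ContMDiff 𝓘(ℝ, E) 𝓘(ℝ, E) (⊤ : ℕ∞) ⇑σ)
    (hσ2 : ∀ g : G, σ (σ g) = g)
    (K : Subgroup G) (hK : ∀ k ∈ K, σ k = k)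
    (hKopen : IsOpen {x : ↥(sigmaFixed σ) | (x : G) ∈ K})
    {G' : Type*} [Group G'] [TopologicalSpace G'] [ChartedSpace E G']
    [LieGroup 𝓘(ℝ, E) (⊤ : ℕ∞) G'] [ConnectedSpace G']
    (π : G' →* G) (hπ : ContMDiff 𝓘(ℝ, E) 𝓘(ℝ, E) (⊤ : ℕ∞) ⇑π)
    (hπsurj : Function.Surjective ⇑π) (hπcov : IsCoveringMap ⇑π)
    (σ' : G' →* G') (hσ' : ContMDiff 𝓘(ℝ, E) 𝓘(ℝ, E) (⊤ : ℕ∞) ⇑σ')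
    (hσ'2 : ∀ h : G', σ' (σ' h) = h) (hcomp : ∀ h : G', π (σ' h) = σ (π h))
    (hfix : ⇑π ⁻¹' (K : Set G) = {h : G' | σ' h = h}) :
    ∃ φ : (G ⧸ K) → G',
      Continuous φ ∧ Function.Injective φ ∧
      (∀ g' : G', φ (QuotientGroup.mk (π g')) = g' * (σ' g')⁻¹) ∧
      Set.range φ = Set.range fun h : G' => h * (σ' h)⁻¹ := by
  classical
  haveI : IsTopologicalGroup G := topologicalGroup_of_lieGroup 𝓘(ℝ, E) (⊤ : ℕ∞)
  haveI : IsTopologicalGroup G' := topologicalGroup_of_lieGroup 𝓘(ℝ, E) (⊤ : ℕ∞)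
  -- the twist map
  set ψ : G' → G' := fun h => h * (σ' h)⁻¹ with hψ
  -- key equivalence
  have key : ∀ a b : G', π (a⁻¹ * b) ∈ K → ψ a = ψ b := by
    intro a b hab
    have h1 : σ' (a⁻¹ * b) = a⁻¹ * b := (Set.ext_iff.mp hfix (a⁻¹ * b)).mp hab
    have h1' : (σ' a)⁻¹ * σ' b = a⁻¹ * b := by simpa [map_mul, map_inv] using h1
    have h2 : σ' b = σ' a * (a⁻¹ * b) := by rw [← h1']; group
    simp only [hψ]
    rw [h2]; group
  have key2 : ∀ a b : G', ψ a = ψ b → π (a⁻¹ * b) ∈ K := by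
    intro a b h
    have h3 : σ' (a⁻¹ * b) = a⁻¹ * b := by
      rw [map_mul, map_inv]
      have h4 : (σ' a)⁻¹ = a⁻¹ * (b * (σ' b)⁻¹) := by
        have := h; simp only [hψ] at this
        rw [← this]; group
      rw [h4]; group
    exact (Set.ext_iff.mp hfix (a⁻¹ * b)).mpr h3
  -- the lifted function on G
  set f : G → G' := fun g => ψ (hπsurj g).choose with hf
  have hwd : ∀ a b : G, @Setoid.r G (QuotientGroup.leftRel K) a b → f a = f b := by
    intro a b hab
    rw [show @Setoid.r G (QuotientGroup.leftRel K) a b ↔ a⁻¹ * b ∈ K from QuotientGroup.leftRel_apply] at hab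
    apply key
    have ha : π (hπsurj a).choose = a := (hπsurj a).choose_spec
    have hb : π (hπsurj b).choose = b := (hπsurj b).choose_spec
    rw [map_mul, map_inv, ha, hb]
    exact hab
  set φ : (G ⧸ K) → G' := fun x => Quotient.liftOn' x f hwd with hφ
  have hmk : ∀ g : G, φ (QuotientGroup.mk g) = f g := fun g => rfl
  have hspec : ∀ g' : G', φ (QuotientGroup.mk (π g')) = g' * (σ' g')⁻¹ := by
    intro g'
    rw [hmk]
    have : π ((hπsurj (π g')).choose⁻¹ * g') ∈ K := by
      rw [map_mul, map_inv, (hπsurj (π g')).choose_spec, inv_mul_cancel]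
      exact one_mem K
    exact key _ _ this
  refine ⟨φ, ?_, ?_, hspec, ?_⟩
  · -- continuity
    have hq : Topology.IsQuotientMap (fun g' : G' => (QuotientGroup.mk (π g') : G ⧸ K)) := by
      refine IsOpenMap.isQuotientMap ?_ ?_ ?_
      · exact IsOpenMap.comp (QuotientGroup.isOpenMap_coe) hπcov.isOpenMap
      · exact continuous_quot_mk.comp hπ.continuous
      · exact (Quot.mk_surjective).comp hπsurj
    rw [hq.continuous_iff]
    have : (φ ∘ fun g' : G' => (QuotientGroup.mk (π g') : G ⧸ K)) = ψ := by
      funext g'; exact hspec g'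
    rw [this]
    exact (ContMDiff.mul contMDiff_id (ContMDiff.inv hσ')).continuous
  · -- injectivity
    intro x y hxy
    induction x using QuotientGroup.induction_on with
    | H a =>
    induction y using QuotientGroup.induction_on with
    | H b =>
    obtain ⟨a', ha'⟩ := hπsurj a
    obtain ⟨b', hb'⟩ := hπsurj b
    rw [← ha', ← hb'] at hxy ⊢
    rw [hspec, hspec] at hxy
    have := key2 a' b' hxy
    rw [QuotientGroup.eq]
    rwa [map_mul, map_inv] at this
  · -- range
    ext h
    constructor
    · rintro ⟨x, rfl⟩
      induction x using QuotientGroup.induction_on with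
      | H a =>
      obtain ⟨a', ha'⟩ := hπsurj a
      rw [← ha', hspec]
      exact ⟨a', rfl⟩
    · rintro ⟨g', rfl⟩
      exact ⟨QuotientGroup.mk (π g'), hspec g'⟩


end
end

section
/- Let G' be a connected real Lie group, π : G' → G a smooth surjective group homomorphism that is a topological covering map, and σ' : G' → G' a smooth involutive automorphism with π∘σ' = σ∘π such that the kernel of π is contained in (G')^{σ'} := {h ∈ G' : σ'(h) = h}. Then for every g ∈ G and h' ∈ G', the element g'·h'·σ'(g')⁻¹ is independent of the choice of lift g' ∈ π⁻¹(g), and the resulting assignment τ'_g(h') = g'·h'·σ'(g')⁻¹ defines an action of the group G on the space G' (i.e. τ'_e = id and τ'_{g₁g₂} = τ'_{g₁}∘τ'_{g₂}), with each map τ'_g continuous; moreover the map φ of the previous statement is equivariant under this action: if additionally π⁻¹(K) = (G')^{σ'}, then φ(g₀gK) = τ'_{g₀}(φ(gK)) for all g₀, g ∈ G, where φ(gK) = g'·σ'(g')⁻¹ for any g' ∈ π⁻¹(g). -/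
noncomputable section

open scoped Manifold Pointwise

attribute [local instance] Path.Homotopic.setoid

universe u v

lemma ker_central_of_covering {E : Type*} [NormedAddCommGroup E] [NormedSpace ℝ E]
    {G : Type*} [Group G] [TopologicalSpace G]
    {G' : Type*} [Group G'] [TopologicalSpace G'] [ChartedSpace E G']
    [LieGroup 𝓘(ℝ, E) (⊤ : ℕ∞) G'] [ConnectedSpace G']
    (π : G' →* G) (hπcov : IsCoveringMap ⇑π)
    (z : G') (hz : π z = 1) : ∀ g : G', g * z * g⁻¹ = z := by
  haveI : IsTopologicalGroup G' := topologicalGroup_of_lieGroup 𝓘(ℝ, E) (⊤ : ℕ∞) (G := G')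
  haveI : DiscreteTopology (⇑π ⁻¹' {(1 : G)} : Set G') := (hπcov 1).1
  intro g
  have hmem : ∀ g : G', g * z * g⁻¹ ∈ (⇑π ⁻¹' {(1 : G)} : Set G') := by
    intro g
    simp [Set.mem_preimage, map_mul, map_inv, hz]
  have hF : Continuous (fun g : G' =>
      (⟨g * z * g⁻¹, hmem g⟩ : (⇑π ⁻¹' {(1 : G)} : Set G'))) := by
    apply Continuous.subtype_mk
    continuity
  have hlc := (IsLocallyConstant.iff_continuous _).mpr hF
  have h := hlc.apply_eq_of_preconnectedSpace g 1
  have := congrArg Subtype.val h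
  simpa using this

theorem twisted_conjugation_action_descends
    {E : Type*} [NormedAddCommGroup E] [NormedSpace ℝ E]
    {G : Type*} [Group G] [TopologicalSpace G] [ChartedSpace E G]
    [LieGroup 𝓘(ℝ, E) (⊤ : ℕ∞) G] [ConnectedSpace G]
    (σ : G →* G) (hσ : ContMDiff 𝓘(ℝ, E) 𝓘(ℝ, E) (⊤ : ℕ∞) ⇑σ)
    (hσ2 : ∀ g : G, σ (σ g) = g)
    (K : Subgroup G) (hK : ∀ k ∈ K, σ k = k)
    (hKopen : IsOpen {x : ↥(sigmaFixed σ) | (x : G) ∈ K})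
    {G' : Type*} [Group G'] [TopologicalSpace G'] [ChartedSpace E G']
    [LieGroup 𝓘(ℝ, E) (⊤ : ℕ∞) G'] [ConnectedSpace G']
    (π : G' →* G) (hπ : ContMDiff 𝓘(ℝ, E) 𝓘(ℝ, E) (⊤ : ℕ∞) ⇑π)
    (hπsurj : Function.Surjective ⇑π) (hπcov : IsCoveringMap ⇑π)
    (σ' : G' →* G') (hσ' : ContMDiff 𝓘(ℝ, E) 𝓘(ℝ, E) (⊤ : ℕ∞) ⇑σ')
    (hσ'2 : ∀ h : G', σ' (σ' h) = h) (hcomp : ∀ h : G', π (σ' h) = σ (π h))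
    (hker : ∀ h' : G', π h' = 1 → σ' h' = h') :
    (∀ g₁' g₂' : G', π g₁' = π g₂' →
      ∀ h' : G', g₁' * h' * (σ' g₁')⁻¹ = g₂' * h' * (σ' g₂')⁻¹) ∧
    ∃ τ : G → G' → G',
      (∀ (g : G) (g' : G'), π g' = g → ∀ h' : G', τ g h' = g' * h' * (σ' g')⁻¹) ∧
      τ 1 = id ∧
      (∀ g₁ g₂ : G, τ (g₁ * g₂) = τ g₁ ∘ τ g₂) ∧
      (∀ g : G, Continuous (τ g)) ∧
      (⇑π ⁻¹' (K : Set G) = {h : G' | σ' h = h} →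
        ∀ φ : (G ⧸ K) → G',
          (∀ g' : G', φ (QuotientGroup.mk (π g')) = g' * (σ' g')⁻¹) →
          ∀ g₀' g' : G',
            φ (QuotientGroup.mk (π g₀' * π g')) = τ (π g₀') (φ (QuotientGroup.mk (π g')))) := by
  -- well-definedness
  have hwd : ∀ g₁' g₂' : G', π g₁' = π g₂' →
      ∀ h' : G', g₁' * h' * (σ' g₁')⁻¹ = g₂' * h' * (σ' g₂')⁻¹ := by
    intro g₁' g₂' hg h'
    set z := g₁'⁻¹ * g₂' with hzdef
    have hz : π z = 1 := by
      simp [hzdef, map_mul, map_inv, hg]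
    have hzfix : σ' z = z := hker z hz
    have hcent := ker_central_of_covering (E := E) π hπcov z hz
    have hg2 : g₂' = g₁' * z := by rw [hzdef]; group
    have hczh : z * h' = h' * z := by
      have h3 : h'⁻¹ * z * h'⁻¹⁻¹ = z := hcent h'⁻¹
      rw [inv_inv] at h3
      calc z * h' = h' * (h'⁻¹ * z * h') := by group
        _ = h' * z := by rw [h3]
    rw [hg2, map_mul, hzfix, mul_inv_rev]
    calc g₁' * h' * (σ' g₁')⁻¹
        = g₁' * (h' * z) * (z⁻¹ * (σ' g₁')⁻¹) := by group
      _ = g₁' * (z * h') * (z⁻¹ * (σ' g₁')⁻¹) := by rw [hczh]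
      _ = g₁' * z * h' * (z⁻¹ * (σ' g₁')⁻¹) := by group
  refine ⟨hwd, ?_⟩
  have hlift : ∀ g : G, π ((hπsurj g).choose) = g := fun g => (hπsurj g).choose_spec
  refine ⟨fun g h' => (hπsurj g).choose * h' * (σ' ((hπsurj g).choose))⁻¹, ?_, ?_, ?_, ?_, ?_⟩
  · intro g g' hg' h'
    exact hwd _ _ (by rw [hlift g, hg']) h'
  · funext h'
    have := hwd ((hπsurj (1 : G)).choose) 1 (by rw [hlift]; simp) h'
    simp only [this, map_one, one_mul, inv_one, mul_one, id]
  · intro g₁ g₂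
    funext h'
    have ha := hlift g₁
    have hb := hlift g₂
    set a := (hπsurj g₁).choose
    set b := (hπsurj g₂).choose
    have hab : π (a * b) = g₁ * g₂ := by rw [map_mul, ha, hb]
    have h1 := hwd ((hπsurj (g₁ * g₂)).choose) (a * b) (by rw [hlift, hab]) h'
    simp only [Function.comp_apply, h1, map_mul, mul_inv_rev]
    group
    rfl
  · intro g
    haveI : IsTopologicalGroup G' := topologicalGroup_of_lieGroup 𝓘(ℝ, E) (⊤ : ℕ∞) (G := G')
    continuity
  · intro _ φ hφ g₀' g'
    have h1 : π g₀' * π g' = π (g₀' * g') := (map_mul π g₀' g').symm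
    rw [h1, hφ (g₀' * g'), map_mul, mul_inv_rev]
    have h2 := hwd ((hπsurj (π g₀')).choose) g₀' (hlift (π g₀')) (φ (QuotientGroup.mk (π g')))
    simp only []
    rw [h2, hφ g']
    group


end
end
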